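/- arXiv:2504.05202 — 5 statements merged into one kernel-verified Lean document; each statement's English description precedes it below -/
import Mathlib

section
/- Let f : ℝ → ℝ be symmetric about 0 (f(x) = f(-x)), positive, decreasing on [0, ∞), and log-convex on [0, ∞). Then for any real Δ ≥ 0 and any x, x' with |x - x'| ≤ Δ, we have f(x)/f(x') ≤ f(0)/f(Δ). -/
/-!
Since `f` is even, only `|x|` and `|x'|` matter, and these still differ by at most `Δ`. If
`|x| ≥ |x'|` the ratio is at most `1 ≤ f 0 / f Δ` by monotonicity. Otherwise convexity of `log ∘ f`
gives `f a * f (b - a) ≤ f 0 * f b` for `0 ≤ a ≤ b` (the pair `a, b - a` is squeezed between `0, b`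
with the same sum), and `f Δ ≤ f (b - a)` finishes the argument.
-/

open Real Set

theorem ConvexOn.map_add_map_le_of_add_eq {𝕜 : Type*} [Field 𝕜] [LinearOrder 𝕜]
    [IsStrictOrderedRing 𝕜] {s : Set 𝕜} {f : 𝕜 → 𝕜} (hf : ConvexOn 𝕜 s f) {x y z w : 𝕜}
    (hx : x ∈ s) (hw : w ∈ s) (hxy : x ≤ y) (hyw : y ≤ w) (hsum : y + z = x + w) :
    f y + f z ≤ f x + f w := by
  rcases hxy.trans hyw |>.eq_or_lt with hxw | hxw
  · have hy : y = x := le_antisymm (hxw ▸ hyw) hxy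
    have hz : z = x := by linarith
    rw [hy, hz, hxw]
  have hwx : 0 < w - x := sub_pos.mpr hxw
  set a := (w - y) / (w - x) with ha_def
  set b := (y - x) / (w - x) with hb_def
  have hab : a + b = 1 := by rw [ha_def, hb_def]; field_simp; ring
  have hy_eq : a * x + b * w = y := by rw [ha_def, hb_def]; field_simp; ring
  have hz_eq : b * x + a * w = z := by
    rw [ha_def, hb_def]; field_simp; linear_combination (x - w) * hsum
  have ha : 0 ≤ a := div_nonneg (sub_nonneg.mpr hyw) hwx.le
  have hb : 0 ≤ b := div_nonneg (sub_nonneg.mpr hxy) hwx.le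
  have hy := hf.2 hx hw ha hb hab
  have hz := hf.2 hx hw hb ha (by rw [add_comm, hab])
  simp only [smul_eq_mul, hy_eq, hz_eq] at hy hz
  linear_combination hy + hz + (f x + f w) * hab

theorem mul_le_mul_of_convexOn_log {s : Set ℝ} {f : ℝ → ℝ}
    (hf : ConvexOn ℝ s fun x => log (f x)) (hpos : ∀ x ∈ s, 0 < f x) {x y z w : ℝ}
    (hx : x ∈ s) (hw : w ∈ s) (hxy : x ≤ y) (hyw : y ≤ w) (hsum : y + z = x + w) :
    f y * f z ≤ f x * f w := by
  have hy : y ∈ s := hf.1.ordConnected.out hx hw ⟨hxy, hyw⟩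
  have hz : z ∈ s := hf.1.ordConnected.out hx hw ⟨by linarith, by linarith⟩
  have hlog := hf.map_add_map_le_of_add_eq hx hw hxy hyw hsum
  rw [← log_mul (hpos y hy).ne' (hpos z hz).ne', ← log_mul (hpos x hx).ne' (hpos w hw).ne'] at hlog
  exact (log_le_log_iff (mul_pos (hpos y hy) (hpos z hz)) (mul_pos (hpos x hx) (hpos w hw))).mp hlog

theorem apply_abs_of_forall_apply_neg {α β : Type*} [AddGroup α] [LinearOrder α] {f : α → β}
    (hsymm : ∀ x, f x = f (-x)) (x : α) : f |x| = f x := by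
  rcases abs_choice x with h | h <;> rw [h]
  exact (hsymm x).symm

theorem div_le_div_of_antitoneOn_of_convexOn_log {f : ℝ → ℝ} (hpos : ∀ x, 0 < f x)
    (hdec : AntitoneOn f (Ici 0)) (hlc : ConvexOn ℝ (Ici 0) fun x => log (f x))
    {Δ a b : ℝ} (hΔ : 0 ≤ Δ) (ha : 0 ≤ a) (hb : 0 ≤ b) (hdist : |a - b| ≤ Δ) :
    f a / f b ≤ f 0 / f Δ := by
  rcases le_or_gt b a with hba | hab
  · calc f a / f b ≤ 1 := div_le_one_of_le₀ (hdec hb ha hba) (hpos b).le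
      _ ≤ f 0 / f Δ := (one_le_div (hpos Δ)).mpr (hdec self_mem_Ici hΔ hΔ)
  have hba : b - a ≤ Δ := by linarith [(abs_le.mp hdist).1]
  have hmul : f a * f (b - a) ≤ f 0 * f b :=
    mul_le_mul_of_convexOn_log hlc (fun x _ => hpos x) self_mem_Ici hb ha hab.le (by ring)
  have hfΔ : f Δ ≤ f (b - a) := hdec (mem_Ici.mpr (by linarith)) (mem_Ici.mpr hΔ) hba
  rw [div_le_div_iff₀ (hpos b) (hpos Δ)]
  calc f a * f Δ ≤ f a * f (b - a) := mul_le_mul_of_nonneg_left hfΔ (hpos a).le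
    _ ≤ f 0 * f b := hmul

theorem stmt_0 (f : ℝ → ℝ)
    (hsymm : ∀ x, f x = f (-x))
    (hpos : ∀ x, 0 < f x)
    (hdec : AntitoneOn f (Ici 0))
    (hlc : ConvexOn ℝ (Ici 0) (fun x => Real.log (f x))) :
    ∀ Δ : ℝ, 0 ≤ Δ → ∀ x x' : ℝ, |x - x'| ≤ Δ →
      f x / f x' ≤ f 0 / f Δ := by
  intro Δ hΔ x x' h
  rw [← apply_abs_of_forall_apply_neg hsymm x, ← apply_abs_of_forall_apply_neg hsymm x']
  exact div_le_div_of_antitoneOn_of_convexOn_log hpos hdec hlc hΔ (abs_nonneg x) (abs_nonneg x')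
    ((abs_abs_sub_abs_le_abs_sub x x').trans h)
end

section
/- Let a > 0 and let β ∈ (0,1). Define g : ℝ → ℝ by g(x) = e^{−a x} · Γ(β + x)/Γ(1 + x) for x ≥ 0. Then g is decreasing and log-convex on [0, ∞). -/
open Real Set

namespace Stmt6Aux

open MeasureTheory

/-- Integrability of the Beta integrand on `Ioo 0 1`. -/
lemma stmt6_integrableOn_beta {u v : ℝ} (hu : 0 < u) (hv : 0 < v) :
    IntegrableOn (fun t : ℝ => t ^ (u - 1) * (1 - t) ^ (v - 1)) (Ioo 0 1) := by
  have h := (Complex.betaIntegral_convergent (u := (u : ℂ)) (v := (v : ℂ))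
    (by simpa using hu) (by simpa using hv)).norm
  rw [intervalIntegrable_iff_integrableOn_Ioc_of_le zero_le_one] at h
  refine (h.mono_set Ioo_subset_Ioc_self).congr_fun (fun t ht => ?_) measurableSet_Ioo
  obtain ⟨ht0, ht1⟩ := ht
  have h1t : (0:ℝ) < 1 - t := by linarith
  simp only [norm_mul]
  rw [Complex.norm_cpow_eq_rpow_re_of_pos ht0, show (1 : ℂ) - (t:ℝ) = ((1 - t : ℝ) : ℂ) by push_cast; ring,
    Complex.norm_cpow_eq_rpow_re_of_pos h1t]
  norm_num

/-- Real Beta integral identity. -/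
lemma stmt6_beta_eq {u v : ℝ} (hu : 0 < u) (hv : 0 < v) :
    Real.Gamma u * Real.Gamma v
      = Real.Gamma (u + v) * ∫ t in Ioo (0:ℝ) 1, t ^ (u - 1) * (1 - t) ^ (v - 1) := by
  have h := Complex.Gamma_mul_Gamma_eq_betaIntegral (s := (u : ℂ)) (t := (v : ℂ))
    (by simpa using hu) (by simpa using hv)
  have hbeta : Complex.betaIntegral u v
      = ((∫ t in Ioo (0:ℝ) 1, t ^ (u - 1) * (1 - t) ^ (v - 1) : ℝ) : ℂ) := by
    rw [Complex.betaIntegral, intervalIntegral.integral_of_le zero_le_one,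
      MeasureTheory.integral_Ioc_eq_integral_Ioo]
    refine (setIntegral_congr_fun measurableSet_Ioo (fun t ht => ?_)).trans
      (integral_ofReal (f := fun t => t ^ (u - 1) * (1 - t) ^ (v - 1)))
    have h1t : (0:ℝ) ≤ 1 - t := by linarith [ht.2]
    show _ = ((t ^ (u - 1) * (1 - t) ^ (v - 1) : ℝ) : ℂ)
    rw [Complex.ofReal_mul, Complex.ofReal_cpow ht.1.le, Complex.ofReal_cpow h1t]
    push_cast
    ring
  rw [hbeta, ← Complex.ofReal_add, Complex.Gamma_ofReal, Complex.Gamma_ofReal,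
    Complex.Gamma_ofReal] at h
  exact_mod_cast h

/-- Integrability of our specific integrand. -/
lemma stmt6_int {β x : ℝ} (hβ1 : 0 < β) (hβ2 : β < 1) (hx : 0 ≤ x) :
    IntegrableOn (fun t : ℝ => t ^ (β + x - 1) * (1 - t) ^ (-β)) (Ioo 0 1) := by
  have := stmt6_integrableOn_beta (u := β + x) (v := 1 - β) (by linarith) (by linarith)
  simpa [show (1:ℝ) - β - 1 = -β by ring] using this

/-- Hölder inequality giving log-convexity of the Beta-type integral. -/
lemma stmt6_holder {β x y p q : ℝ} (hβ1 : 0 < β) (hβ2 : β < 1) (hx : 0 ≤ x) (hy : 0 ≤ y)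
    (hp : 0 < p) (hq : 0 < q) (hpq : p + q = 1) :
    (∫ t in Ioo (0:ℝ) 1, t ^ (β + (p * x + q * y) - 1) * (1 - t) ^ (-β))
      ≤ (∫ t in Ioo (0:ℝ) 1, t ^ (β + x - 1) * (1 - t) ^ (-β)) ^ p *
        (∫ t in Ioo (0:ℝ) 1, t ^ (β + y - 1) * (1 - t) ^ (-β)) ^ q := by
  have e : Real.HolderConjugate (1 / p) (1 / q) := Real.holderConjugate_one_div hp hq hpq
  set μ := volume.restrict (Ioo (0:ℝ) 1) with hμ
  set b : ℝ → ℝ → ℝ := fun w t => t ^ (β + w - 1) * (1 - t) ^ (-β) with hb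
  set f : ℝ → ℝ → ℝ → ℝ := fun c w t => b w t ^ c with hf
  have posb : ∀ w : ℝ, ∀ t ∈ Ioo (0:ℝ) 1, 0 ≤ b w t := fun w t ht =>
    mul_nonneg (rpow_nonneg ht.1.le _) (rpow_nonneg (by linarith [ht.2]) _)
  have posf : ∀ c w : ℝ, ∀ t ∈ Ioo (0:ℝ) 1, 0 ≤ f c w t := fun c w t ht =>
    rpow_nonneg (posb w t ht) _
  have posf' : ∀ c w : ℝ, 0 ≤ᵐ[μ] f c w := fun c w =>
    (ae_restrict_iff' measurableSet_Ioo).mpr (ae_of_all _ (posf c w))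
  have fpow : ∀ {c : ℝ}, 0 < c → ∀ (w : ℝ), ∀ t ∈ Ioo (0:ℝ) 1,
      b w t = f c w t ^ (1 / c) := by
    intro c hc w t ht
    rw [hf]
    dsimp only
    rw [← Real.rpow_mul (posb w t ht), mul_one_div_cancel hc.ne', Real.rpow_one]
  have contb : ∀ w : ℝ, ContinuousOn (b w) (Ioo (0:ℝ) 1) := by
    intro w t ht
    have h1 : ContinuousAt (fun s : ℝ => s ^ (β + w - 1)) t :=
      Real.continuousAt_rpow_const _ _ (Or.inl ht.1.ne')
    have h2 : ContinuousAt (fun s : ℝ => (1 - s) ^ (-β)) t := by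
      have : ContinuousAt (fun u : ℝ => u ^ (-β)) (1 - t) :=
        Real.continuousAt_rpow_const _ _ (Or.inl (sub_pos.mpr ht.2).ne')
      exact this.comp ((continuous_const.sub continuous_id).continuousAt)
    exact ((h1.mul h2)).continuousWithinAt
  have contf : ∀ c w : ℝ, ContinuousOn (f c w) (Ioo (0:ℝ) 1) := by
    intro c w t ht
    have hbt : 0 < b w t :=
      mul_pos (rpow_pos_of_pos ht.1 _) (rpow_pos_of_pos (by linarith [ht.2]) _)
    have : ContinuousAt (fun u : ℝ => u ^ c) (b w t) :=
      Real.continuousAt_rpow_const _ _ (Or.inl hbt.ne')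
    exact (this.comp_continuousWithinAt (contb w t ht))
  have f_mem : ∀ {c w : ℝ}, 0 < c → 0 ≤ w → MemLp (f c w) (ENNReal.ofReal (1 / c)) μ := by
    intro c w hc hw
    have A : ENNReal.ofReal (1 / c) ≠ 0 := by
      rwa [Ne, ENNReal.ofReal_eq_zero, not_le, one_div_pos]
    have B : ENNReal.ofReal (1 / c) ≠ ⊤ := ENNReal.ofReal_ne_top
    rw [← memLp_norm_rpow_iff _ A B, ENNReal.toReal_ofReal (by positivity),
      ENNReal.div_self A B, memLp_one_iff_integrable]
    · apply Integrable.congr (stmt6_int hβ1 hβ2 hw)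
      refine Filter.eventuallyEq_of_mem (self_mem_ae_restrict measurableSet_Ioo) fun t ht => ?_
      show b w t = ‖f c w t‖ ^ (1 / c)
      rw [norm_of_nonneg (posf c w t ht), ← fpow hc w t ht]
    · exact (contf c w).aestronglyMeasurable measurableSet_Ioo
  have key := MeasureTheory.integral_mul_le_Lp_mul_Lq_of_nonneg e (posf' p x) (posf' q y)
    (f_mem hp hx) (f_mem hq hy)
  rw [one_div_one_div, one_div_one_div] at key
  calc (∫ t in Ioo (0:ℝ) 1, t ^ (β + (p * x + q * y) - 1) * (1 - t) ^ (-β))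
      = ∫ t in Ioo (0:ℝ) 1, f p x t * f q y t := by
        refine setIntegral_congr_fun measurableSet_Ioo fun t ht => ?_
        have ht0 := ht.1
        have ht1 : (0:ℝ) < 1 - t := by linarith [ht.2]
        show _ = b x t ^ p * b y t ^ q
        rw [hb]
        dsimp only
        rw [Real.mul_rpow (rpow_nonneg ht0.le _) (rpow_nonneg ht1.le _),
          Real.mul_rpow (rpow_nonneg ht0.le _) (rpow_nonneg ht1.le _),
          ← Real.rpow_mul ht0.le, ← Real.rpow_mul ht1.le, ← Real.rpow_mul ht0.le,
          ← Real.rpow_mul ht1.le]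
        rw [mul_mul_mul_comm, ← Real.rpow_add ht0, ← Real.rpow_add ht1,
          show (β + x - 1) * p + (β + y - 1) * q = β + (p * x + q * y) - 1 from by
            linear_combination (β - 1) * hpq,
          show -β * p + -β * q = -β from by linear_combination (-β) * hpq]
    _ ≤ (∫ t in Ioo (0:ℝ) 1, f p x t ^ (1/p)) ^ p * (∫ t in Ioo (0:ℝ) 1, f q y t ^ (1/q)) ^ q := key
    _ = _ := by
        congr 1
        · congr 1
          exact setIntegral_congr_fun measurableSet_Ioo fun t ht => (fpow hp x t ht).symm
        · congr 1
          exact setIntegral_congr_fun measurableSet_Ioo fun t ht => (fpow hq y t ht).symm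

end Stmt6Aux

open Stmt6Aux MeasureTheory in
theorem stmt_6 (a β : ℝ) (ha : 0 < a) (hβ : β ∈ Set.Ioo (0 : ℝ) 1)
    (g : ℝ → ℝ)
    (hg : ∀ x, g x = Real.exp (-a * x) * (Real.Gamma (β + x) / Real.Gamma (1 + x))) :
    AntitoneOn g (Ici 0) ∧ ConvexOn ℝ (Ici 0) (fun x => Real.log (g x)) := by
  obtain ⟨hβ1, hβ2⟩ := hβ
  set J : ℝ → ℝ := fun x => ∫ t in Ioo (0:ℝ) 1, t ^ (β + x - 1) * (1 - t) ^ (-β) with hJ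
  have hΓβ : 0 < Real.Gamma (1 - β) := Real.Gamma_pos_of_pos (by linarith)
  have hbeta : ∀ x : ℝ, 0 ≤ x →
      Real.Gamma (β + x) * Real.Gamma (1 - β) = Real.Gamma (1 + x) * J x := by
    intro x hx
    have h := stmt6_beta_eq (u := β + x) (v := 1 - β) (by linarith) (by linarith)
    rw [show β + x + (1 - β) = 1 + x from by ring] at h
    rw [h, hJ]
    congr 1
    simp [show (1:ℝ) - β - 1 = -β from by ring]
  have hΓ1x : ∀ x : ℝ, 0 ≤ x → 0 < Real.Gamma (1 + x) := fun x hx =>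
    Real.Gamma_pos_of_pos (by linarith)
  have hΓβx : ∀ x : ℝ, 0 ≤ x → 0 < Real.Gamma (β + x) := fun x hx =>
    Real.Gamma_pos_of_pos (by linarith)
  have hJpos : ∀ x : ℝ, 0 ≤ x → 0 < J x := by
    intro x hx
    have h := hbeta x hx
    have := hΓ1x x hx
    nlinarith [mul_pos (hΓβx x hx) hΓβ]
  have hratio : ∀ x : ℝ, 0 ≤ x →
      Real.Gamma (β + x) / Real.Gamma (1 + x) = J x / Real.Gamma (1 - β) := by
    intro x hx
    have h := hbeta x hx
    field_simp [(hΓ1x x hx).ne']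
    linarith [h]
  have hganti : AntitoneOn g (Ici 0) := by
    intro x hx y hy hxy
    simp only [mem_Ici] at hx hy
    rw [hg, hg, hratio x hx, hratio y hy]
    have hJle : J y ≤ J x := by
      refine setIntegral_mono_on (stmt6_int hβ1 hβ2 hy) (stmt6_int hβ1 hβ2 hx)
        measurableSet_Ioo fun t ht => ?_
      refine mul_le_mul_of_nonneg_right ?_ (rpow_nonneg (by linarith [ht.2]) _)
      exact Real.rpow_le_rpow_of_exponent_ge ht.1 ht.2.le (by linarith)
    have hexp : Real.exp (-a * y) ≤ Real.exp (-a * x) :=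
      Real.exp_le_exp.mpr (by nlinarith)
    refine mul_le_mul hexp ?_ ?_ (Real.exp_pos _).le
    · gcongr
    · exact div_nonneg (hJpos y hy).le hΓβ.le
  refine ⟨hganti, ?_⟩
  have hlog : ∀ w : ℝ, 0 ≤ w →
      Real.log (g w) = -a * w + (Real.log (J w) - Real.log (Real.Gamma (1 - β))) := by
    intro w hw
    rw [hg, hratio w hw, Real.log_mul (Real.exp_ne_zero _)
      (div_pos (hJpos w hw) hΓβ).ne', Real.log_exp,
      Real.log_div (hJpos w hw).ne' hΓβ.ne']
  refine convexOn_iff_forall_pos.mpr ⟨convex_Ici 0, fun x hx y hy p q hp hq hpq => ?_⟩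
  simp only [mem_Ici] at hx hy
  have hz : 0 ≤ p * x + q * y := by positivity
  simp only [smul_eq_mul]
  rw [hlog _ hz, hlog _ hx, hlog _ hy]
  have hkey : Real.log (J (p * x + q * y)) ≤ p * Real.log (J x) + q * Real.log (J y) := by
    rw [← Real.log_rpow (hJpos x hx), ← Real.log_rpow (hJpos y hy),
      ← Real.log_mul (rpow_pos_of_pos (hJpos x hx) p).ne' (rpow_pos_of_pos (hJpos y hy) q).ne']
    exact Real.log_le_log (hJpos _ hz) (stmt6_holder hβ1 hβ2 hx hy hp hq hpq)
  have expand : p * (-a * x + (Real.log (J x) - Real.log (Real.Gamma (1 - β))))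
      + q * (-a * y + (Real.log (J y) - Real.log (Real.Gamma (1 - β))))
      = -a * (p * x + q * y)
        + ((p * Real.log (J x) + q * Real.log (J y)) - Real.log (Real.Gamma (1 - β))) := by
    linear_combination (-(Real.log (Real.Gamma (1 - β)))) * hpq
  rw [expand]
  linarith [hkey]
end

section
/- For a > 0, the variance of the discrete Laplace distribution with PMF f(k) = tanh(a/2)·e^{−a|k|} on ℤ equals 1/(cosh(a) − 1). Concretely, the sum over k ∈ ℤ of k² · tanh(a/2) · e^{−a|k|} equals 1/(cosh(a) − 1). -/
open Real

theorem stmt_10 (a : ℝ) (ha : 0 < a) :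
    ∑' k : ℤ, (k : ℝ) ^ 2 * (Real.tanh (a / 2) * Real.exp (-a * |(k : ℝ)|)) =
      1 / (Real.cosh a - 1) := by
  set r : ℝ := Real.exp (-a) with hr
  have hr0 : 0 < r := Real.exp_pos _
  have hr1 : r < 1 := by
    rw [hr, Real.exp_lt_one_iff]; linarith
  have hrn : ‖r‖ < 1 := by rw [Real.norm_eq_abs, abs_of_pos hr0]; exact hr1
  have h1r : (1 : ℝ) - r ≠ 0 := by linarith
  -- key sum over ℕ
  have hchoose : ∀ n : ℕ, (((n + 2).choose 2 : ℕ) : ℝ) = ((n : ℝ) + 1) * ((n : ℝ) + 2) / 2 := by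
    intro n
    have h : (n + 2).choose 2 * 2 = (n + 1) * (n + 2) := by
      rw [Nat.choose_two_right]
      have h21 : n + 2 - 1 = n + 1 := rfl
      rw [h21]
      have he : 2 ∣ (n + 2) * (n + 1) := by
        rw [Nat.mul_comm]
        exact (Nat.even_mul_succ_self (n + 1)).two_dvd
      rw [Nat.div_mul_cancel he, Nat.mul_comm]
    have := congrArg (fun x : ℕ => (x : ℝ)) h
    push_cast at this
    linarith
  have A : HasSum (fun n : ℕ => (((n + 2).choose 2 : ℕ) : ℝ) * r ^ n) (1 / (1 - r) ^ 3) :=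
    hasSum_choose_mul_geometric_of_norm_lt_one 2 hrn
  have B : HasSum (fun n : ℕ => (n : ℝ) * r ^ n) (r / (1 - r) ^ 2) :=
    hasSum_coe_mul_geometric_of_norm_lt_one hrn
  have C : HasSum (fun n : ℕ => r ^ n) (1 / (1 - r)) := by
    simpa using hasSum_geometric_of_norm_lt_one hrn
  have S : HasSum (fun n : ℕ => (n : ℝ) ^ 2 * r ^ n) (r * (1 + r) / (1 - r) ^ 3) := by
    have comb := ((A.mul_left 2).sub (B.mul_left 3)).sub (C.mul_left 2)
    have heq : (fun n : ℕ => 2 * ((((n + 2).choose 2 : ℕ) : ℝ) * r ^ n)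
        - 3 * ((n : ℝ) * r ^ n) - 2 * r ^ n) = fun n : ℕ => (n : ℝ) ^ 2 * r ^ n := by
      funext n; rw [hchoose n]; ring
    rw [heq] at comb
    convert comb using 1
    rfl
    field_simp
    ring
  set t : ℝ := Real.tanh (a / 2) with ht
  set F : ℤ → ℝ := fun k => (k : ℝ) ^ 2 * (t * Real.exp (-a * |(k : ℝ)|)) with hF
  have habs : ∀ n : ℕ, Real.exp (-a * |((n : ℤ) : ℝ)|) = r ^ n := by
    intro n
    rw [Int.cast_natCast, Nat.abs_cast, hr, ← Real.exp_nat_mul]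
    ring_nf
  have h1 : HasSum (fun n : ℕ => F n) (t * (r * (1 + r) / (1 - r) ^ 3)) := by
    have := S.mul_left t
    convert this using 2 with n
    rfl
    rw [hF]
    simp only []
    rw [habs n]
    push_cast
    ring
  have h2 : HasSum (fun n : ℕ => F (-(n + 1))) (t * (r * (1 + r) / (1 - r) ^ 3)) := by
    have Sshift : HasSum (fun n : ℕ => ((n : ℝ) + 1) ^ 2 * r ^ (n + 1))
        (r * (1 + r) / (1 - r) ^ 3) := by
      have := (hasSum_nat_add_iff' (f := fun n : ℕ => (n : ℝ) ^ 2 * r ^ n) 1).2 S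
      simpa [add_comm] using this
    have := Sshift.mul_left t
    convert this using 2 with n
    rfl
    rw [hF]
    simp only []
    have : |((-(n + 1) : ℤ) : ℝ)| = (n : ℝ) + 1 := by
      push_cast
      rw [abs_neg, abs_of_nonneg (by positivity)]
    rw [this]
    have : Real.exp (-a * ((n : ℝ) + 1)) = r ^ (n + 1) := by
      rw [hr, ← Real.exp_nat_mul]
      push_cast
      ring_nf
    rw [this]
    push_cast
    ring
  have htot : HasSum F (t * (r * (1 + r) / (1 - r) ^ 3) + t * (r * (1 + r) / (1 - r) ^ 3)) :=
    h1.of_nat_of_neg_add_one h2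
  rw [htot.tsum_eq]
  -- final algebra
  have hcosh : Real.cosh a - 1 = (1 - r) ^ 2 / (2 * r) := by
    rw [Real.cosh_eq]
    have hxy : Real.exp a * r = 1 := by rw [hr, ← Real.exp_add]; simp
    have hea : Real.exp a = r⁻¹ := by field_simp at hxy ⊢; linarith [hxy]
    rw [hea, hr]
    field_simp
    ring
  have htanh : t = (1 - r) / (1 + r) := by
    rw [ht, Real.tanh_eq_sinh_div_cosh, Real.sinh_eq, Real.cosh_eq]
    have h1 : Real.exp (-(a / 2)) * Real.exp (a / 2) = 1 := by
      rw [← Real.exp_add]; simp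
    have h2 : Real.exp (-(a / 2)) * Real.exp (-(a / 2)) = r := by
      rw [← Real.exp_add, hr]; ring_nf
    have hp : 0 < Real.exp (a / 2) + Real.exp (-(a / 2)) := by positivity
    have h1p : (0:ℝ) < 1 + r := by linarith
    have h3 : Real.exp (a / 2) * r = Real.exp (-(a / 2)) := by
      linear_combination (-Real.exp (a / 2)) * h2 + Real.exp (-(a / 2)) * h1
    rw [div_eq_div_iff (by positivity) (by positivity)]
    linear_combination h3
  rw [hcosh, htanh]
  have h1p : (1 : ℝ) + r ≠ 0 := by positivity
  field_simp
  ring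
end

section
/- Let ε > 0 and let Δ be a positive integer. Let X₁, …, X_Δ be independent discrete Laplace random variables with parameter ε, and let Z = Σ_{i=1}^Δ i·X_i with PMF f_Z. Then for every ξ ∈ {1, …, Δ} and every integer z, f_Z(z − ξ)/f_Z(z) ≤ e^ε. That is, the MSDLap-noise addition mechanism is ε-DP for sensitivity Δ. -/
open Real MeasureTheory ProbabilityTheory

theorem stmt_14 (ε : ℝ) (hε : 0 < ε) (Δ : ℕ) (hΔ : 1 ≤ Δ)
    {Ω : Type*} [MeasurableSpace Ω] (μ : Measure Ω) [IsProbabilityMeasure μ]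
    (X : Fin Δ → Ω → ℤ)
    (hmeas : ∀ i, Measurable (X i))
    (hindep : iIndepFun X μ)
    (hdist : ∀ i, ∀ k : ℤ,
      μ {ω | X i ω = k} = ENNReal.ofReal (Real.tanh (ε / 2) * Real.exp (-ε * |(k : ℝ)|)))
    (Z : Ω → ℤ) (hZ : ∀ ω, Z ω = ∑ i : Fin Δ, ((i : ℕ) + 1 : ℤ) * X i ω) :
    ∀ ξ : ℤ, 1 ≤ ξ → ξ ≤ Δ → ∀ z : ℤ,
      μ {ω | Z ω = z - ξ} ≤ ENNReal.ofReal (Real.exp ε) * μ {ω | Z ω = z} := by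
  intro ξ hξ1 hξΔ z
  have hξ0 : (ξ : ℤ) ≠ 0 := by omega
  have h2 : (ξ - 1).toNat < Δ := by omega
  set i₀ : Fin Δ := ⟨(ξ - 1).toNat, h2⟩ with hi₀
  have hcoef : (((i₀ : ℕ) : ℤ) + 1) = ξ := by
    simp only [hi₀]
    omega
  -- scaled variables
  set Y : Fin Δ → Ω → ℤ := fun i ω => (((i : ℕ) : ℤ) + 1) * X i ω with hY
  have hYmeas : ∀ i, Measurable (Y i) := fun i => (hmeas i).const_mul _
  have hYindep : iIndepFun Y μ := by
    have := hindep.comp (fun i (x : ℤ) => (((i : ℕ) : ℤ) + 1) * x)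
      (fun i => measurable_id.const_mul _)
    exact this
  set s : Finset (Fin Δ) := Finset.univ.erase i₀ with hs
  set W : Ω → ℤ := fun ω => ∑ j ∈ s, Y j ω with hWdef
  have hWmeas : Measurable W := Finset.measurable_sum _ (fun j _ => hYmeas j)
  have hZW : ∀ ω, Z ω = Y i₀ ω + W ω := by
    intro ω
    rw [hZ ω, hWdef]
    simp only
    rw [← Finset.add_sum_erase Finset.univ (fun j => Y j ω) (Finset.mem_univ i₀)]
  have hind : IndepFun (Y i₀) W μ := by
    have h := (hYindep.indepFun_finsetSum_of_notMem hYmeas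
      (s := s) (i := i₀) (Finset.notMem_erase _ _)).symm
    have hWeq : W = ∑ j ∈ s, Y j := by
      ext ω; simp [hWdef, Finset.sum_apply]
    rwa [hWeq]
  -- per-term independence product formula
  have hterm : ∀ (k w : ℤ),
      μ ({ω | X i₀ ω = k} ∩ {ω | W ω = w}) = μ {ω | X i₀ ω = k} * μ {ω | W ω = w} := by
    intro k w
    have hset : {ω | X i₀ ω = k} = Y i₀ ⁻¹' {ξ * k} := by
      ext ω
      simp only [Set.mem_setOf_eq, Set.mem_preimage, Set.mem_singleton_iff, hY, hcoef]
      constructor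
      · rintro rfl; rfl
      · intro h; exact mul_left_cancel₀ hξ0 h
    have h1 := hind.measure_inter_preimage_eq_mul {ξ * k} {w}
      (measurableSet_singleton _) (measurableSet_singleton _)
    have hWset : {ω | W ω = w} = W ⁻¹' {w} := rfl
    rw [hset, hWset, h1]
  -- decomposition of the distribution of Z
  have key : ∀ z' : ℤ, μ {ω | Z ω = z'}
      = ∑' k : ℤ, μ {ω | X i₀ ω = k} * μ {ω | W ω = z' - ξ * k} := by
    intro z'
    have hunion : {ω | Z ω = z'}
        = ⋃ k : ℤ, ({ω | X i₀ ω = k} ∩ {ω | W ω = z' - ξ * k}) := by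
      ext ω
      simp only [Set.mem_setOf_eq, Set.mem_iUnion, Set.mem_inter_iff, hZW ω, hY, hcoef]
      constructor
      · intro h
        exact ⟨X i₀ ω, rfl, by omega⟩
      · rintro ⟨k, rfl, h2⟩
        omega
    rw [hunion, measure_iUnion]
    · exact tsum_congr fun k => hterm k _
    · intro k l hkl
      simp only [Function.onFun, Set.disjoint_left]
      rintro ω ⟨h1, -⟩ ⟨h2, -⟩
      exact hkl (h1 ▸ h2 ▸ rfl)
    · intro k
      exact ((hmeas i₀) (measurableSet_singleton k)).inter
        (hWmeas (measurableSet_singleton _))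
  -- pointwise density ratio bound
  have hc : 0 < Real.tanh (ε / 2) := by
    rw [Real.tanh_eq_sinh_div_cosh]
    exact div_pos (by rw [Real.sinh_pos_iff]; positivity) (Real.cosh_pos _)
  have hpt : ∀ m : ℤ, μ {ω | X i₀ ω = m - 1}
      ≤ ENNReal.ofReal (Real.exp ε) * μ {ω | X i₀ ω = m} := by
    intro m
    rw [hdist i₀ (m - 1), hdist i₀ m, ← ENNReal.ofReal_mul (Real.exp_nonneg ε)]
    apply ENNReal.ofReal_le_ofReal
    rw [← mul_assoc, mul_comm (Real.exp ε) (Real.tanh (ε / 2)), mul_assoc]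
    apply mul_le_mul_of_nonneg_left _ hc.le
    rw [← Real.exp_add]
    apply Real.exp_le_exp.2
    have habs : |(m : ℝ)| - |((m - 1 : ℤ) : ℝ)| ≤ 1 := by
      have := abs_sub_abs_le_abs_sub (m : ℝ) ((m - 1 : ℤ) : ℝ)
      push_cast at this ⊢
      simpa using this
    nlinarith
  -- reindex and conclude
  rw [key (z - ξ), key z]
  have hre : (∑' k : ℤ, μ {ω | X i₀ ω = k} * μ {ω | W ω = z - ξ - ξ * k})
      = ∑' m : ℤ, μ {ω | X i₀ ω = m - 1} * μ {ω | W ω = z - ξ * m} := by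
    have := (Equiv.addRight (1 : ℤ)).tsum_eq
      (fun m : ℤ => μ {ω | X i₀ ω = m - 1} * μ {ω | W ω = z - ξ * m})
    rw [← this]
    apply tsum_congr
    intro k
    simp only [Equiv.coe_addRight, add_sub_cancel_right]
    congr 2
    ring
  rw [hre, ← ENNReal.tsum_mul_left]
  apply ENNReal.tsum_le_tsum
  intro m
  rw [← mul_assoc]
  exact mul_le_mul_left (hpt m) _
end

section
/- Fix a positive integer Δ and ε ≥ log(Δ(Δ+1)(2Δ+1)/2). Consider the discrete staircase distribution with parameter r = 1: f(0) = a, and for integers i with kΔ < |i| ≤ (k+1)Δ appropriately, f(i) = a·e^{−ε(k+1)} for (k)Δ < |i| ≤ (k+1)Δ where k ≥ 0 and a = (1 − e^{−ε})/(1 + (2Δ−1)e^{−ε}). Then its variance (= Σ_{i∈ℤ} i² f(i)) is at least Δ(Δ+1)(2Δ+1)/(3(e^ε + 2Δ − 1)). -/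
open Real

private lemma aux_sq_sum (n : ℕ) :
    ∑ j : Fin n, ((j : ℝ) + 1) ^ 2 = (n : ℝ) * ((n : ℝ) + 1) * (2 * (n : ℝ) + 1) / 6 := by
  induction n with
  | zero => simp
  | succ m ih =>
    rw [Fin.sum_univ_castSucc]
    simp only [Fin.coe_castSucc, Fin.val_last] at *
    rw [ih]
    push_cast
    field_simp
    ring

private lemma aux_le (Δ : ℕ) (hΔ : 0 < Δ) (n : ℕ) : n ≤ Δ * ((n + Δ - 1) / Δ) := by
  rcases n with _ | m
  · simp
  · have h0 : m + 1 + Δ - 1 = m + Δ := by omega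
    rw [h0, Nat.add_div_right m hΔ, Nat.mul_succ]
    have h1 : Δ * (m / Δ) + m % Δ = m := Nat.div_add_mod m Δ
    have h2 : m % Δ < Δ := Nat.mod_lt _ hΔ
    generalize Δ * (m / Δ) = A at h1 ⊢
    generalize m % Δ = B at h1 h2
    omega

private lemma aux_div (Δ l j : ℕ) (hΔ : 0 < Δ) (hj : j < Δ) :
    (Δ * l + j + 1 + Δ - 1) / Δ = l + 1 := by
  have h0 : Δ * l + j + 1 + Δ - 1 = Δ * (l + 1) + j := by
    rw [Nat.mul_succ]; generalize Δ * l = A; omega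
  rw [h0, Nat.mul_add_div hΔ, Nat.div_eq_of_lt hj]

private lemma aux_unique (Δ l1 j1 l2 j2 : ℕ) (hΔ : 0 < Δ) (h1 : j1 < Δ) (h2 : j2 < Δ)
    (h : Δ * l1 + j1 = Δ * l2 + j2) : l1 = l2 ∧ j1 = j2 := by
  have e1 : (Δ * l1 + j1) / Δ = l1 := by rw [Nat.mul_add_div hΔ, Nat.div_eq_of_lt h1, Nat.add_zero]
  have e2 : (Δ * l2 + j2) / Δ = l2 := by rw [Nat.mul_add_div hΔ, Nat.div_eq_of_lt h2, Nat.add_zero]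
  have e3 : (Δ * l1 + j1) % Δ = j1 := by rw [Nat.mul_add_mod, Nat.mod_eq_of_lt h1]
  have e4 : (Δ * l2 + j2) % Δ = j2 := by rw [Nat.mul_add_mod, Nat.mod_eq_of_lt h2]
  constructor
  · rw [← e1, ← e2, h]
  · rw [← e3, ← e4, h]

theorem stmt_19 (Δ : ℕ) (hΔ : 1 ≤ Δ) (ε : ℝ)
    (hε : Real.log ((Δ : ℝ) * (Δ + 1) * (2 * Δ + 1) / 2) ≤ ε)
    (a : ℝ) (ha : a = (1 - Real.exp (-ε)) / (1 + (2 * Δ - 1) * Real.exp (-ε)))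
    (f : ℤ → ℝ)
    (hf : ∀ i : ℤ, f i = a * Real.exp (-ε * ((i.natAbs + Δ - 1) / Δ : ℕ))) :
    (Δ : ℝ) * (Δ + 1) * (2 * Δ + 1) / (3 * (Real.exp ε + 2 * Δ - 1)) ≤
      ∑' i : ℤ, (i : ℝ) ^ 2 * f i := by
  have hΔ0 : 0 < Δ := hΔ
  have hΔR : (1 : ℝ) ≤ Δ := by exact_mod_cast hΔ
  have hε0 : 0 < ε := by
    have h3 : (1 : ℝ) < (Δ : ℝ) * (Δ + 1) * (2 * Δ + 1) / 2 := by
      nlinarith [hΔR, sq_nonneg ((Δ : ℝ) - 1), sq_nonneg ((Δ : ℝ) + 1), mul_le_mul hΔR hΔR zero_le_one (le_trans zero_le_one hΔR)]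
    exact lt_of_lt_of_le (Real.log_pos h3) hε
  set x : ℝ := Real.exp (-ε) with hxdef
  have hx0 : 0 < x := Real.exp_pos _
  have hx1 : x < 1 := by
    rw [hxdef, Real.exp_lt_one_iff]; linarith
  have hden : 0 < 1 + (2 * (Δ : ℝ) - 1) * x := by nlinarith
  have ha0 : 0 < a := by rw [ha]; exact div_pos (by linarith) hden
  have hfnn : ∀ i : ℤ, 0 ≤ f i := fun i => by rw [hf i]; positivity
  have hGnn : ∀ i : ℤ, 0 ≤ (i : ℝ) ^ 2 * f i := fun i =>
    mul_nonneg (sq_nonneg _) (hfnn i)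
  -- Summability of the full sum
  have hGsum : Summable (fun i : ℤ => (i : ℝ) ^ 2 * f i) := by
    set r : ℝ := Real.exp (-(ε / Δ)) with hrdef
    have hr0 : 0 < r := Real.exp_pos _
    have hr1 : r < 1 := by
      rw [hrdef, Real.exp_lt_one_iff]
      have hd : (0:ℝ) < (Δ : ℝ) := by positivity
      have : 0 < ε / (Δ : ℝ) := div_pos hε0 hd
      linarith
    have hrn : ‖r‖ < 1 := by rw [Real.norm_eq_abs, abs_of_pos hr0]; exact hr1
    have hsum : Summable (fun n : ℕ => a * ((n : ℝ) ^ 2 * r ^ n)) :=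
      (summable_pow_mul_geometric_of_norm_lt_one 2 hrn).mul_left a
    have key : ∀ n : ℕ, ∀ i : ℤ, i.natAbs = n →
        (i : ℝ) ^ 2 * f i ≤ a * ((n : ℝ) ^ 2 * r ^ n) := by
      intro n i hi
      rw [hf i, hi]
      have hsq : (i : ℝ) ^ 2 = (n : ℝ) ^ 2 := by
        rw [← hi, ← sq_abs ((i : ℝ)), ← Int.cast_abs, Int.abs_eq_natAbs, Int.cast_natCast]
      rw [hsq]
      have hexp : Real.exp (-ε * ((n + Δ - 1) / Δ : ℕ)) ≤ r ^ n := by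
        rw [hrdef, ← Real.exp_nat_mul]
        apply Real.exp_le_exp.2
        have hle := aux_le Δ hΔ0 n
        have hleR : (n : ℝ) ≤ (Δ : ℝ) * (((n + Δ - 1) / Δ : ℕ) : ℝ) := by
          exact_mod_cast hle
        have hΔpos : (0 : ℝ) < (Δ : ℝ) := by positivity
        rw [mul_neg, neg_mul, neg_le_neg_iff, mul_div_assoc', div_le_iff₀ hΔpos]
        calc (n : ℝ) * ε ≤ (Δ : ℝ) * (((n + Δ - 1) / Δ : ℕ) : ℝ) * ε :=
              mul_le_mul_of_nonneg_right hleR hε0.le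
          _ = ε * (((n + Δ - 1) / Δ : ℕ) : ℝ) * (Δ : ℝ) := by ring
      calc (n : ℝ) ^ 2 * (a * Real.exp (-ε * ((n + Δ - 1) / Δ : ℕ)))
          ≤ (n : ℝ) ^ 2 * (a * r ^ n) := by
            apply mul_le_mul_of_nonneg_left _ (by positivity)
            exact mul_le_mul_of_nonneg_left hexp ha0.le
        _ = a * ((n : ℝ) ^ 2 * r ^ n) := by ring
    apply Summable.of_nat_of_neg
    · apply hsum.of_nonneg_of_le (fun n => hGnn _)
      intro n; exact key n n (by simp)
    · apply hsum.of_nonneg_of_le (fun n => hGnn _)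
      intro n; exact key n (-(n : ℤ)) (by simp)
  -- the injection
  set e : ℕ × Fin Δ × Bool → ℤ :=
    fun p => (cond p.2.2 1 (-1)) * ((Δ * p.1 + (p.2.1 : ℕ) + 1 : ℕ) : ℤ) with hedef
  have habs : ∀ p : ℕ × Fin Δ × Bool, (e p).natAbs = Δ * p.1 + (p.2.1 : ℕ) + 1 := by
    rintro ⟨l, j, b⟩
    cases b <;>
      simp only [hedef, Bool.cond_false, Bool.cond_true, neg_one_mul, one_mul,
        Int.natAbs_neg, Int.natAbs_natCast]
  have he : Function.Injective e := by
    rintro ⟨l1, j1, b1⟩ ⟨l2, j2, b2⟩ h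
    have hn : Δ * l1 + (j1 : ℕ) + 1 = Δ * l2 + (j2 : ℕ) + 1 := by
      rw [← habs ⟨l1, j1, b1⟩, ← habs ⟨l2, j2, b2⟩, h]
    obtain ⟨hl, hj⟩ := aux_unique Δ l1 j1 l2 j2 hΔ0 j1.isLt j2.isLt (by omega)
    have hb : b1 = b2 := by
      cases b1 <;> cases b2 <;> simp [hedef, hl, hj] at h ⊢ <;> omega
    exact Prod.ext hl (Prod.ext (Fin.ext hj) hb)
  -- the small function
  set g : ℕ × Fin Δ × Bool → ℝ :=
    fun p => (a * x * x ^ p.1) * (((p.2.1 : ℕ) : ℝ) + 1) ^ 2 with hgdef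
  have hgle : ∀ p : ℕ × Fin Δ × Bool, g p ≤ ((e p : ℤ) : ℝ) ^ 2 * f (e p) := by
    rintro ⟨l, j, b⟩
    have hab := habs ⟨l, j, b⟩
    rw [hf (e (l, j, b)), hab, aux_div Δ l (j : ℕ) hΔ0 j.isLt]
    have hexp : Real.exp (-ε * ((l + 1 : ℕ) : ℝ)) = x * x ^ l := by
      have h0 : -ε * ((l + 1 : ℕ) : ℝ) = ((l + 1 : ℕ) : ℝ) * (-ε) := by ring
      rw [h0, Real.exp_nat_mul, hxdef, pow_succ]
      ring
    rw [hexp]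
    have hsq : ((e (l, j, b) : ℤ) : ℝ) ^ 2 = ((Δ * l + (j : ℕ) + 1 : ℕ) : ℝ) ^ 2 := by
      rw [← hab, Nat.cast_natAbs, Int.cast_abs, sq_abs]
    rw [hsq]
    have hM : ((j : ℕ) : ℝ) + 1 ≤ ((Δ * l + (j : ℕ) + 1 : ℕ) : ℝ) := by
      push_cast
      have : (0 : ℝ) ≤ (Δ : ℝ) * (l : ℝ) := by positivity
      linarith
    have h1 : (((j : ℕ) : ℝ) + 1) ^ 2 ≤ ((Δ * l + (j : ℕ) + 1 : ℕ) : ℝ) ^ 2 :=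
      pow_le_pow_left₀ (by positivity) hM 2
    calc (a * x * x ^ l) * (((j : ℕ) : ℝ) + 1) ^ 2
        ≤ (a * x * x ^ l) * ((Δ * l + (j : ℕ) + 1 : ℕ) : ℝ) ^ 2 := by
          apply mul_le_mul_of_nonneg_left h1 (by positivity)
      _ = ((Δ * l + (j : ℕ) + 1 : ℕ) : ℝ) ^ 2 * (a * (x * x ^ l)) := by ring
  -- summability of g
  have hFsum : Summable (fun l : ℕ => a * x * x ^ l) :=
    (summable_geometric_of_lt_one hx0.le hx1).mul_left (a * x)
  have hWsum : Summable (fun w : Fin Δ × Bool => (((w.1 : ℕ) : ℝ) + 1) ^ 2) :=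
    Summable.of_finite
  have hgsum : Summable g := by
    have := hFsum.mul_of_nonneg hWsum (fun l => by positivity) (fun w => by positivity)
    exact this
  -- tsum of g
  have htg : ∑' p, g p =
      (Δ : ℝ) * (Δ + 1) * (2 * Δ + 1) / (3 * (Real.exp ε + 2 * Δ - 1)) := by
    have h1 : ∑' p, g p = ∑' l : ℕ, ∑' w : Fin Δ × Bool, g (l, w) :=
      hgsum.tsum_prod' (fun l => Summable.of_finite)
    have h2 : ∀ l : ℕ, ∑' w : Fin Δ × Bool, g (l, w) =
        (a * x * x ^ l) * ((Δ : ℝ) * (Δ + 1) * (2 * Δ + 1) / 3) := by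
      intro l
      rw [tsum_fintype]
      have : ∑ w : Fin Δ × Bool, g (l, w) =
          (a * x * x ^ l) * ∑ w : Fin Δ × Bool, (((w.1 : ℕ) : ℝ) + 1) ^ 2 := by
        rw [Finset.mul_sum]
      rw [this]
      congr 1
      rw [Fintype.sum_prod_type]
      have : ∀ j : Fin Δ, ∑ _b : Bool, (((j : ℕ) : ℝ) + 1) ^ 2
          = 2 * (((j : ℕ) : ℝ) + 1) ^ 2 := by
        intro j; simp [Fintype.sum_bool]; try ring
      rw [Finset.sum_congr rfl (fun j _ => this j), ← Finset.mul_sum, aux_sq_sum]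
      ring
    rw [h1]
    simp_rw [h2]
    rw [tsum_mul_right]
    have h3 : ∑' l : ℕ, a * x * x ^ l = a * x * (1 - x)⁻¹ := by
      rw [tsum_mul_left, tsum_geometric_of_lt_one hx0.le hx1]
    rw [h3, ha]
    have hE : Real.exp ε = x⁻¹ := by
      rw [hxdef, Real.exp_neg, inv_inv]
    rw [hE]
    have h1x : (1 : ℝ) - x ≠ 0 := by linarith
    have hd2 : (1 : ℝ) + (2 * (Δ:ℝ) - 1) * x ≠ 0 := ne_of_gt hden
    have hx' : x ≠ 0 := hx0.ne'
    have hd3 : x⁻¹ + 2 * (Δ:ℝ) - 1 ≠ 0 := by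
      have h1 : 1 < x⁻¹ := by
        have h2 := mul_lt_mul_of_pos_right hx1 (inv_pos.2 hx0)
        rwa [mul_inv_cancel₀ (ne_of_gt hx0), one_mul] at h2
      nlinarith
    have key : x⁻¹ + 2 * (Δ:ℝ) - 1 = (1 + (2 * (Δ:ℝ) - 1) * x) / x := by
      field_simp
      ring
    rw [key]
    field_simp
  calc (Δ : ℝ) * (Δ + 1) * (2 * Δ + 1) / (3 * (Real.exp ε + 2 * Δ - 1))
      = ∑' p, g p := htg.symm
    _ ≤ ∑' i : ℤ, (i : ℝ) ^ 2 * f i :=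
      hgsum.tsum_le_tsum_of_inj e he (fun c _ => hGnn c) hgle hGsum
end
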